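/- Let γ < κ be a limit ordinal and let I be a monotone family on κ such that κ is not a union of fewer than κ elements of I. If κ > 2^{<γ}, then Cut does not have a winning strategy in the game U(κ, I, <γ). -/

import Mathlib

open Cardinal Set

universe u

/-- A strategy for Cut in a binary cut-and-choose game, identified with a labeled
binary tree: `L f α` is the label at the node given by the branch `f` at level `α`. -/
def IsCutTree {K : Type u} (L : (Ordinal.{u} → Bool) → Ordinal.{u} → Set K) : Prop :=
  (∀ f g : Ordinal.{u} → Bool, ∀ α : Ordinal.{u}, (∀ β < α, f β = g β) → L f α = L g α) ∧
  (∀ f : Ordinal.{u} → Bool, L f 0 = Set.univ) ∧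
  (∀ f g : Ordinal.{u} → Bool, ∀ α : Ordinal.{u}, (∀ β < α, f β = g β) → f α = true →
    g α = false →
      L f (α + 1) ∪ L g (α + 1) = L f α ∧ Disjoint (L f (α + 1)) (L g (α + 1))) ∧
  (∀ f : Ordinal.{u} → Bool, ∀ α : Ordinal.{u}, Order.IsSuccLimit α → L f α = ⋂ β ∈ Set.Iio α, L f β)

/-- `2 ^{<γ} = sup { 2 ^ δ : δ < γ a cardinal }`. -/
noncomputable def twoPowLT (γ : Ordinal.{u}) : Cardinal.{u} :=
  ⨆ δ : {δ : Cardinal.{u} // δ.ord < γ}, 2 ^ δ.1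

/-! If Cut had a winning strategy `L`, every point `x` would follow its own branch, taking at
each split the piece that contains `x`. Along that branch Cut wins at some level below `γ`, so
`x` lies in a node label belonging to `I`. Hence the labels in `I` of nodes below level `γ`
cover `K`; but there are at most `|γ| · 2^{<γ} < |K|` of them. -/

open Function

open Classical in
noncomputable def cutBranch {K : Type u} (L : (Ordinal.{u} → Bool) → Ordinal.{u} → Set K)
    (x : K) (α : Ordinal.{u}) : Bool :=
  decide (x ∈ L (fun β => if _ : β < α then cutBranch L x β else true) (α + 1))
termination_by α

namespace IsCutTree

variable {K : Type u} {L : (Ordinal.{u} → Bool) → Ordinal.{u} → Set K}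

theorem label_succ_congr (hL : IsCutTree L) {f g : Ordinal.{u} → Bool} {α : Ordinal.{u}}
    (h : ∀ β ≤ α, f β = g β) : L f (α + 1) = L g (α + 1) :=
  hL.1 f g _ fun β hβ => h β (Order.lt_add_one_iff.1 hβ)

theorem mem_label_succ (hL : IsCutTree L) {f : Ordinal.{u} → Bool} {α : Ordinal.{u}} {x : K}
    (hx : x ∈ L f α) (hfα : f α = true ↔ x ∈ L (update f α true) (α + 1)) :
    x ∈ L f (α + 1) := by
  have below : ∀ b, ∀ β < α, update f α b β = f β := fun b β hβ => update_of_ne hβ.ne _ _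
  have hsplit := hL.2.2.1 (update f α true) (update f α false) α
    (fun β hβ => by rw [below _ _ hβ, below _ _ hβ]) (by simp) (by simp)
  have hfollow : ∀ b, f α = b → L f (α + 1) = L (update f α b) (α + 1) := fun b hb =>
    hL.label_succ_congr fun β hβ => by
      rcases hβ.lt_or_eq with hβ | rfl
      · exact (below b β hβ).symm
      · simp [hb]
  cases hb : f α
  · have hx' : x ∈ L (update f α true) (α + 1) ∪ L (update f α false) (α + 1) := by
      rwa [hsplit.1, hL.1 _ f α (below true)]
    rw [hfollow false hb]
    exact hx'.resolve_left (by simpa [hb] using hfα)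
  · rw [hfollow true hb]
    exact hfα.1 hb

theorem cutBranch_eq_true_iff (hL : IsCutTree L) (x : K) (α : Ordinal.{u}) :
    cutBranch L x α = true ↔ x ∈ L (update (cutBranch L x) α true) (α + 1) := by
  rw [cutBranch.eq_1, Bool.decide_iff, hL.label_succ_congr]
  intro β hβ
  rcases hβ.lt_or_eq with hβ | rfl
  · simp [hβ, hβ.ne]
  · simp

theorem mem_cutBranch (hL : IsCutTree L) (x : K) (α : Ordinal.{u}) :
    x ∈ L (cutBranch L x) α := by
  induction α using Ordinal.limitRecOn with
  | zero => simp [hL.2.1]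
  | add_one α ih => exact hL.mem_label_succ ih (hL.cutBranch_eq_true_iff x α)
  | limit α hα ih => simpa [hL.2.2.2 _ α hα] using ih

end IsCutTree

theorem two_pow_card_le_twoPowLT {δ γ : Ordinal.{u}} (h : δ < γ) : 2 ^ δ.card ≤ twoPowLT γ := by
  refine le_ciSup (f := fun δ : {δ : Cardinal.{u} // δ.ord < γ} => (2 : Cardinal) ^ δ.1)
    ⟨2 ^ γ.card, ?_⟩ ⟨δ.card, (ord_card_le δ).trans_lt h⟩
  rintro _ ⟨c, rfl⟩
  exact power_le_power_left two_ne_zero (by simpa using Ordinal.card_le_card c.2.le)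

theorem card_labels_below_le {K : Type u} {L : (Ordinal.{u} → Bool) → Ordinal.{u} → Set K}
    (hcoh : ∀ f g α, (∀ β < α, f β = g β) → L f α = L g α) (γ : Ordinal.{u}) :
    #{A | ∃ f, ∃ δ < γ, L f δ = A} ≤ γ.card * twoPowLT γ := by
  -- a label at level `δ` only depends on the branch below `δ`
  let F : (Σ δ : Iio γ, (Iio δ.1 → Bool)) → Set K :=
    fun i => L (fun β => if h : β < i.1 then i.2 ⟨β, h⟩ else true) i.1
  have hrange : {A | ∃ f, ∃ δ < γ, L f δ = A} ⊆ range F := by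
    rintro _ ⟨f, δ, hδ, rfl⟩
    exact ⟨⟨⟨δ, hδ⟩, fun β => f β⟩, hcoh _ _ _ fun β hβ => dif_pos hβ⟩
  have hsigma : #(Σ δ : Iio γ, (Iio δ.1 → Bool)) ≤ lift.{u + 1} (γ.card * twoPowLT γ) := by
    rw [mk_sigma, lift_mul, ← mk_Iio_ordinal, ← sum_const']
    refine sum_le_sum _ _ fun δ => ?_
    calc #(Iio δ.1 → Bool) = lift.{u + 1} (2 ^ δ.1.card) := by
          rw [mk_arrow, mk_Iio_ordinal, lift_two_power, lift_lift, mk_fintype, Fintype.card_bool]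
          simp
      _ ≤ lift.{u + 1} (twoPowLT γ) := lift_le.2 (two_pow_card_le_twoPowLT δ.2)
  rw [← lift_le.{u+1}]
  exact (lift_le.2 (mk_le_mk_of_subset hrange)).trans
    (mk_range_le_lift.trans (by simpa using hsigma))

theorem stmt9_general {K : Type u} (γ : Ordinal.{u}) (hlim : Order.IsSuccLimit γ) (hγκ : γ < (#K).ord)
    (I : Set (Set K))
    (hcover : ∀ (ι : Type u) (A : ι → Set K), #ι < #K → (∀ i, A i ∈ I) →
      (⋃ i, A i) ≠ Set.univ)
    (hcard : twoPowLT γ < #K) :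
    ¬ ∃ L : (Ordinal.{u} → Bool) → Ordinal.{u} → Set K, IsCutTree L ∧
      ∀ f : Ordinal.{u} → Bool, ∃ δ < γ, L f δ ∈ I := by
  rintro ⟨L, hL, hwin⟩
  have hγK : γ.card < #K := lt_ord.1 hγκ
  have hK : ℵ₀ ≤ #K :=
    (Ordinal.aleph0_le_card.2 (Ordinal.omega0_le_of_isSuccLimit hlim)).trans hγK.le
  let leaves : Set (Set K) := {A | ∃ f, ∃ δ < γ, L f δ = A} ∩ I
  have hleaves : #leaves < #K :=
    ((mk_le_mk_of_subset inter_subset_left).trans (card_labels_below_le hL.1 γ)).trans_lt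
      (mul_lt_of_lt hK hγK hcard)
  refine hcover leaves Subtype.val hleaves (fun A => A.2.2) (eq_univ_of_forall fun x => ?_)
  obtain ⟨δ, hδ, hleaf⟩ := hwin (cutBranch L x)
  exact mem_iUnion.2 ⟨⟨_, ⟨_, δ, hδ, rfl⟩, hleaf⟩, hL.mem_cutBranch x δ⟩

/-- Let `γ < κ` be a limit ordinal and let `I` be a monotone family on `κ` such that `κ`
is not a union of fewer than `κ` elements of `I`.  If `κ > 2^{<γ}`, then Cut does not
have a winning strategy in the game `𝒰(κ, I, <γ)` (a labeled binary tree of height `γ`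
such that along every branch some intersection of fewer than `γ`-many choices lies
in `I`). -/
theorem stmt9 {K : Type u} (γ : Ordinal.{u}) (hlim : Order.IsSuccLimit γ) (hγκ : γ < (#K).ord)
    (I : Set (Set K)) (hmono : ∀ A ∈ I, ∀ B, B ⊆ A → B ∈ I)
    (hcover : ∀ (ι : Type u) (A : ι → Set K), #ι < #K → (∀ i, A i ∈ I) →
      (⋃ i, A i) ≠ Set.univ)
    (hcard : twoPowLT γ < #K) :
    ¬ ∃ L : (Ordinal.{u} → Bool) → Ordinal.{u} → Set K, IsCutTree L ∧
      ∀ f : Ordinal.{u} → Bool, ∃ δ < γ, L f δ ∈ I :=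
  stmt9_general γ hlim hγκ I hcover hcard
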